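/- Let S = μ/λ be a strip between k-shapes and let M be a column move from μ to some k-shape ν such that ν/λ is again a strip (i.e., M is a λ-augmentation column move of S). Then M has rank 1. -/

import Mathlib

open scoped Classical

/-! ## Basic objects: cells, partitions, hooks, `k`-boundary, `k`-shapes -/

abbrev Cell : Type := ℕ × ℕ

/-- A partition, encoded as a weakly decreasing, eventually zero function `ℕ → ℕ`
(rows are 0-indexed; a larger row index means a higher row, French convention). -/
def IsPartition (f : ℕ → ℕ) : Prop :=
  (∀ i j : ℕ, i ≤ j → f j ≤ f i) ∧ ∃ N : ℕ, ∀ i : ℕ, N ≤ i → f i = 0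

/-- The cells of the Ferrers diagram of `f`: `(i, j)` with `j < f i` (0-indexed). -/
def cellsOf (f : ℕ → ℕ) : Set Cell := {p : Cell | p.2 < f p.1}

/-- The conjugate: number of rows with at least `j + 1` cells. -/
noncomputable def conj (f : ℕ → ℕ) (j : ℕ) : ℕ := Nat.card {i : ℕ // j < f i}

/-- Hook length of the cell `p` of `f` (0-indexed version of
`(λ_i − j) + (λ^t_j − i) + 1`). -/
noncomputable def hook (f : ℕ → ℕ) (p : Cell) : ℕ :=
  (f p.1 - p.2) + (conj f p.2 - p.1) - 1

/-- The `k`-boundary: cells of `f` with hook length at most `k`. -/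
def bdry (k : ℕ) (f : ℕ → ℕ) : Set Cell := {p : Cell | p ∈ cellsOf f ∧ hook f p ≤ k}

/-- `k`-row shape: the number of cells of the `k`-boundary in row `i`. -/
noncomputable def rsK (k : ℕ) (f : ℕ → ℕ) (i : ℕ) : ℕ :=
  Nat.card {j : ℕ // (i, j) ∈ bdry k f}

/-- `k`-column shape: the number of cells of the `k`-boundary in column `j`. -/
noncomputable def csK (k : ℕ) (f : ℕ → ℕ) (j : ℕ) : ℕ :=
  Nat.card {i : ℕ // (i, j) ∈ bdry k f}

/-- A `k`-shape: a partition whose `k`-row shape and `k`-column shape are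
weakly decreasing. -/
def IsKShape (k : ℕ) (f : ℕ → ℕ) : Prop :=
  IsPartition f ∧ (∀ i j : ℕ, i ≤ j → rsK k f j ≤ rsK k f i) ∧
    ∀ i j : ℕ, i ≤ j → csK k f j ≤ csK k f i

/-- A `k`-core: a partition with no cell of hook length exactly `k`. -/
def IsKCore (k : ℕ) (f : ℕ → ℕ) : Prop :=
  IsPartition f ∧ ∀ p ∈ cellsOf f, hook f p ≠ k

/-! ## Strings and moves -/

/-- Diagonal index of a cell. -/
def diagIdx (p : Cell) : ℤ := (p.2 : ℤ) - (p.1 : ℤ)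

/-- Two cells are contiguous when their diagonal indices differ by `k` or `k+1`. -/
def Contiguous (k : ℕ) (p q : Cell) : Prop :=
  (diagIdx p - diagIdx q).natAbs = k ∨ (diagIdx p - diagIdx q).natAbs = k + 1

/-- `a` lists the cells of the skew shape `g / f` from top to bottom, with
successive cells contiguous and in strictly lower rows: a string. -/
def IsString (k : ℕ) (f g : ℕ → ℕ) (a : List Cell) : Prop :=
  IsPartition f ∧ IsPartition g ∧ (∀ i, f i ≤ g i) ∧ a ≠ [] ∧
    cellsOf g \ cellsOf f = {x : Cell | x ∈ a} ∧
    List.Chain' (fun x y : Cell => y.1 < x.1 ∧ Contiguous k x y) a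

/-- `b` is the leftmost cell of the `k`-boundary of `f` in row `r`. -/
def IsLeftmostBdryInRow (k : ℕ) (f : ℕ → ℕ) (r : ℕ) (b : Cell) : Prop :=
  b ∈ bdry k f ∧ b.1 = r ∧ ∀ c : ℕ, (r, c) ∈ bdry k f → b.2 ≤ c

/-- `b` is the bottom cell of the `k`-boundary of `f` in column `c`. -/
def IsBottomBdryInCol (k : ℕ) (f : ℕ → ℕ) (c : ℕ) (b : Cell) : Prop :=
  b ∈ bdry k f ∧ b.2 = c ∧ ∀ r : ℕ, (r, c) ∈ bdry k f → b.1 ≤ r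

/-- The cell `b₀` (the leftmost boundary cell in the row of the top cell of the
string `a`) exists and has hook length exactly `k`. -/
def B0HookK (k : ℕ) (f : ℕ → ℕ) (a : List Cell) : Prop :=
  ∃ h b : Cell, a.head? = some h ∧ IsLeftmostBdryInRow k f h.1 b ∧ hook f b = k

/-- The cell `b_ℓ` (the bottom boundary cell in the column of the bottom cell of
the string `a`) exists and has hook length exactly `k`. -/
def BlHookK (k : ℕ) (f : ℕ → ℕ) (a : List Cell) : Prop :=
  ∃ h b : Cell, a.getLast? = some h ∧ IsBottomBdryInCol k f h.2 b ∧ hook f b = k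

def RowType (k : ℕ) (f : ℕ → ℕ) (a : List Cell) : Prop := B0HookK k f a ∧ ¬ BlHookK k f a

def ColType (k : ℕ) (f : ℕ → ℕ) (a : List Cell) : Prop := ¬ B0HookK k f a ∧ BlHookK k f a

def CoverType (k : ℕ) (f : ℕ → ℕ) (a : List Cell) : Prop := ¬ B0HookK k f a ∧ ¬ BlHookK k f a

def CocoverType (k : ℕ) (f : ℕ → ℕ) (a : List Cell) : Prop := B0HookK k f a ∧ BlHookK k f a

/-- `k`-row shape extended to integer row indices (0 outside `ℕ`). -/
noncomputable def rsZ (k : ℕ) (f : ℕ → ℕ) (r : ℤ) : ℤ :=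
  if 0 ≤ r then (rsK k f r.toNat : ℤ) else 0

/-- `k`-column shape extended to integer column indices (0 outside `ℕ`). -/
noncomputable def csZ (k : ℕ) (f : ℕ → ℕ) (c : ℤ) : ℤ :=
  if 0 ≤ c then (csK k f c.toNat : ℤ) else 0

/-- The strings `a = g/f` and `b = g'/f'` are translates of each other: the
cells correspond under translation by a fixed vector `v`, the row/column shape
changes correspond under `v`, and corresponding modified rows/columns have the
same size. -/
def TranslateStrings (k : ℕ) (f g f' g' : ℕ → ℕ) (a b : List Cell) : Prop :=
  ∃ v : ℤ × ℤ, a.length = b.length ∧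
    (∀ (i : ℕ) (x y : Cell), a[i]? = some x → b[i]? = some y →
      (y.1 : ℤ) = (x.1 : ℤ) + v.1 ∧ (y.2 : ℤ) = (x.2 : ℤ) + v.2) ∧
    (∀ r : ℤ, rsZ k g r - rsZ k f r = rsZ k g' (r + v.1) - rsZ k f' (r + v.1) ∧
      (rsZ k g r ≠ rsZ k f r → rsZ k f r = rsZ k f' (r + v.1))) ∧
    (∀ c : ℤ, csZ k g c - csZ k f c = csZ k g' (c + v.2) - csZ k f' (c + v.2) ∧
      (csZ k g c ≠ csZ k f c → csZ k f c = csZ k f' (c + v.2)))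

/-- The common data of a row or column move from `lam` to `mu`: a chain of
partitions `lam = shape 0 ⊂ shape 1 ⊂ ⋯ ⊂ shape rank = mu` whose successive
differences are strings of a common length that are translates of each other,
with `lam` and `mu` both `k`-shapes. -/
structure PreMove (k : ℕ) (lam mu : ℕ → ℕ) where
  rank : ℕ
  len : ℕ
  rank_pos : 0 < rank
  len_pos : 0 < len
  shape : ℕ → ℕ → ℕ
  strs : ℕ → List Cell
  shape_zero : shape 0 = lam
  shape_rank : shape rank = mu
  src_kshape : IsKShape k lam
  tgt_kshape : IsKShape k mu
  isStr : ∀ i < rank, IsString k (shape i) (shape (i + 1)) (strs i)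
  strLen : ∀ i < rank, (strs i).length = len
  translates : ∀ i < rank, ∀ j < rank,
    TranslateStrings k (shape i) (shape (i + 1)) (shape j) (shape (j + 1)) (strs i) (strs j)

/-- A row move: all strings are row-type and their top cells occur in
consecutive columns from left to right. -/
def PreMove.IsRowMove {k : ℕ} {lam mu : ℕ → ℕ} (m : PreMove k lam mu) : Prop :=
  (∀ i < m.rank, RowType k (m.shape i) (m.strs i)) ∧
    ∀ i : ℕ, i + 1 < m.rank → ∀ x y : Cell,
      (m.strs i).head? = some x → (m.strs (i + 1)).head? = some y → y.2 = x.2 + 1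

/-- A column move: all strings are column-type and their bottom cells occur in
consecutive rows from bottom to top. -/
def PreMove.IsColMove {k : ℕ} {lam mu : ℕ → ℕ} (m : PreMove k lam mu) : Prop :=
  (∀ i < m.rank, ColType k (m.shape i) (m.strs i)) ∧
    ∀ i : ℕ, i + 1 < m.rank → ∀ x y : Cell,
      (m.strs i).getLast? = some x → (m.strs (i + 1)).getLast? = some y → y.1 = x.1 + 1

/-- A move is a row move or a column move. -/
def PreMove.IsMove {k : ℕ} {lam mu : ℕ → ℕ} (m : PreMove k lam mu) : Prop :=
  m.IsRowMove ∨ m.IsColMove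

/-- There is a move from `lam` to `mu`. -/
def MoveRel (k : ℕ) (lam mu : ℕ → ℕ) : Prop := ∃ m : PreMove k lam mu, m.IsMove

/-- A `f`-addable corner: a cell outside `f` which together with `f` forms the
diagram of a partition. -/
def IsAddableCorner (f : ℕ → ℕ) (x : Cell) : Prop :=
  x ∉ cellsOf f ∧ ∃ g : ℕ → ℕ, IsPartition g ∧ cellsOf g = cellsOf f ∪ {x}

/-! ## Strips -/

/-- The skew shape `g / f` has at most one cell in each column. -/
def OneCellPerCol (f g : ℕ → ℕ) : Prop :=
  ∀ x y : Cell, x ∈ cellsOf g \ cellsOf f → y ∈ cellsOf g \ cellsOf f → x.2 = y.2 → x = y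

/-- The skew shape `g / f` has at most one cell in each row. -/
def OneCellPerRow (f g : ℕ → ℕ) : Prop :=
  ∀ x y : Cell, x ∈ cellsOf g \ cellsOf f → y ∈ cellsOf g \ cellsOf f → x.1 = y.1 → x = y

/-- `mu / lam` is a strip of rank `r` of `k`-shapes: a horizontal strip such
that `rs(mu)/rs(lam)` is a horizontal strip and `cs(mu)/cs(lam)` is a vertical
strip, both of size `r`. -/
def IsStrip (k r : ℕ) (lam mu : ℕ → ℕ) : Prop :=
  IsKShape k lam ∧ IsKShape k mu ∧ (∀ i, lam i ≤ mu i) ∧ OneCellPerCol lam mu ∧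
    (∀ i, rsK k lam i ≤ rsK k mu i) ∧ OneCellPerCol (rsK k lam) (rsK k mu) ∧
    (∀ j, csK k lam j ≤ csK k mu j) ∧ OneCellPerRow (csK k lam) (csK k mu) ∧
    (∑ᶠ i : ℕ, (rsK k mu i - rsK k lam i)) = r ∧
    (∑ᶠ j : ℕ, (csK k mu j - csK k lam j)) = r

/-- `mu / lam` is a strip (of some rank). -/
def IsStripAny (k : ℕ) (lam mu : ℕ → ℕ) : Prop := ∃ r : ℕ, IsStrip k r lam mu

/-- A maximal strip: it admits no `lam`-augmentation move. -/
def MaximalStrip (k : ℕ) (lam mu : ℕ → ℕ) : Prop :=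
  IsStripAny k lam mu ∧ ¬ ∃ nu : ℕ → ℕ, MoveRel k mu nu ∧ IsStripAny k lam nu

/-- A reverse-maximal strip `mu / rho`: there is no move from `rho` to a
`k`-shape `rho'` with `mu / rho'` again a strip. -/
def ReverseMaximalStrip (k : ℕ) (rho mu : ℕ → ℕ) : Prop :=
  IsStripAny k rho mu ∧ ¬ ∃ rho' : ℕ → ℕ, MoveRel k rho rho' ∧ IsStripAny k rho' mu

/-- Adjoin the cell `a` at the end of its row. -/
def addCell (f : ℕ → ℕ) (a : Cell) : ℕ → ℕ := Function.update f a.1 (f a.1 + 1)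

/-- A lower augmentable corner of the strip `mu / lam`: a `mu`-addable corner
`a` whose adjunction expels from the `k`-boundary a cell of `∂mu` in the row of
`a` and in a modified column of the strip. -/
def LowerAugCorner (k : ℕ) (lam mu : ℕ → ℕ) (a : Cell) : Prop :=
  IsAddableCorner mu a ∧ ∃ b : Cell, b ∈ bdry k mu ∧ b.1 = a.1 ∧
    csK k mu b.2 = csK k lam b.2 + 1 ∧ k < hook (addCell mu a) b

/-- An upper augmentable corner of the strip `mu / lam`: a `mu`-addable corner
`a`, not lying directly on top of a cell of the strip, whose adjunction expels
from the `k`-boundary a cell of `∂mu` in the column of `a` and in a modified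
row of the strip. -/
def UpperAugCorner (k : ℕ) (lam mu : ℕ → ℕ) (a : Cell) : Prop :=
  IsAddableCorner mu a ∧ (a.1 = 0 ∨ (a.1 - 1, a.2) ∉ cellsOf mu \ cellsOf lam) ∧
    ∃ b : Cell, b ∈ bdry k mu ∧ b.2 = a.2 ∧
      rsK k mu b.1 = rsK k lam b.1 + 1 ∧ k < hook (addCell mu a) b

/-! ## Paths in the `k`-shape poset and their equivalence -/

/-- Charge of a step from `f` to `g`: 0 for a row move or an empty move, the
number of cells for a column move. -/
noncomputable def stepCharge (k : ℕ) (f g : ℕ → ℕ) : ℕ :=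
  if ∃ m : PreMove k f g, m.IsColMove then (cellsOf g \ cellsOf f).ncard else 0

/-- A path in the `k`-shape poset from `lam` to `nu`, recorded by its list of
vertices; each step is an empty move or a move. -/
def IsPathList (k : ℕ) (lam nu : ℕ → ℕ) (p : List (ℕ → ℕ)) : Prop :=
  p.head? = some lam ∧ p.getLast? = some nu ∧
    List.Chain' (fun f g => f = g ∨ MoveRel k f g) p

/-- The charge of a path: the sum of the charges of its steps. -/
noncomputable def pathCharge (k : ℕ) (p : List (ℕ → ℕ)) : ℕ :=
  (List.zipWith (stepCharge k) p p.tail).sum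

/-- The equivalence on paths generated by diamond equivalences (and by
insertion of empty moves). -/
inductive PathEquiv (k : ℕ) : List (ℕ → ℕ) → List (ℕ → ℕ) → Prop
  | refl (p : List (ℕ → ℕ)) : PathEquiv k p p
  | symm {p q : List (ℕ → ℕ)} : PathEquiv k p q → PathEquiv k q p
  | trans {p q r : List (ℕ → ℕ)} : PathEquiv k p q → PathEquiv k q r → PathEquiv k p r
  | pad (pre post : List (ℕ → ℕ)) (κ : ℕ → ℕ) :
      PathEquiv k (pre ++ κ :: post) (pre ++ κ :: κ :: post)
  | diamond (pre post : List (ℕ → ℕ)) (κ μ ν γ : ℕ → ℕ)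
      (h1 : κ = μ ∨ MoveRel k κ μ) (h2 : μ = γ ∨ MoveRel k μ γ)
      (h3 : κ = ν ∨ MoveRel k κ ν) (h4 : ν = γ ∨ MoveRel k ν γ)
      (hcells : (cellsOf μ \ cellsOf κ) ∪ (cellsOf γ \ cellsOf μ)
          = (cellsOf ν \ cellsOf κ) ∪ (cellsOf γ \ cellsOf ν))
      (hcharge : stepCharge k κ μ + stepCharge k μ γ = stepCharge k κ ν + stepCharge k ν γ) :
      PathEquiv k (pre ++ κ :: μ :: γ :: post) (pre ++ κ :: ν :: γ :: post)

/-- The type of paths in the `k`-shape poset from `lam` to `nu`. -/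
def PathsTo (k : ℕ) (lam nu : ℕ → ℕ) : Type :=
  {p : List (ℕ → ℕ) // IsPathList k lam nu p}

def kPathSetoid (k : ℕ) (lam nu : ℕ → ℕ) : Setoid (PathsTo k lam nu) where
  r p q := PathEquiv k p.1 q.1
  iseqv := ⟨fun p => PathEquiv.refl p.1, fun h => PathEquiv.symm h,
    fun h h' => PathEquiv.trans h h'⟩

/-- Equivalence classes of paths from `lam` to `nu` in the `k`-shape poset. -/
def Patheq (k : ℕ) (lam nu : ℕ → ℕ) : Type := Quotient (kPathSetoid k lam nu)

/-! ## Tableaux -/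

/-- A step of a `k`-shape tableau: a strip of rank strictly less than `k`. -/
def StripStep (k : ℕ) (f g : ℕ → ℕ) : Prop := ∃ r : ℕ, r < k ∧ IsStrip k r f g

/-- A `k`-shape tableau of shape `mu / lam`, recorded by its chain of shapes. -/
def IsTableau (k : ℕ) (lam mu : ℕ → ℕ) (T : List (ℕ → ℕ)) : Prop :=
  T.head? = some lam ∧ T.getLast? = some mu ∧ List.Chain' (StripStep k) T

/-- A maximal `k`-shape tableau: each of its strips is maximal. -/
def IsMaxTableau (k : ℕ) (lam mu : ℕ → ℕ) (T : List (ℕ → ℕ)) : Prop :=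
  IsTableau k lam mu T ∧ List.Chain' (MaximalStrip k) T

/-- A reverse-maximal `k`-shape tableau: each of its strips is reverse-maximal. -/
def IsRevMaxTableau (k : ℕ) (lam mu : ℕ → ℕ) (T : List (ℕ → ℕ)) : Prop :=
  IsTableau k lam mu T ∧ List.Chain' (ReverseMaximalStrip k) T

/-- The rank of the strip `g / f`. -/
noncomputable def stripRank (k : ℕ) (f g : ℕ → ℕ) : ℕ :=
  ∑ᶠ i : ℕ, (rsK k g i - rsK k f i)

/-- The weight of a tableau: the list of ranks of its strips. -/
noncomputable def tabWeight (k : ℕ) (T : List (ℕ → ℕ)) : List ℕ :=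
  List.zipWith (stripRank k) T T.tail

/-- The indent of a cell `b` in the skew shape `mu / lam`: the number of its
cells strictly to the left of `b` in the row of `b`. -/
noncomputable def indent (lam mu : ℕ → ℕ) (b : Cell) : ℕ :=
  Nat.card {x : Cell // x ∈ cellsOf mu \ cellsOf lam ∧ x.1 = b.1 ∧ x.2 < b.2}

/-- A `lam`-augmentation path from `mu` to `nu`: a path in the `k`-shape poset
all of whose vertices `rho` satisfy that `rho / lam` is a strip. -/
def IsAugPath (k : ℕ) (lam mu nu : ℕ → ℕ) (p : List (ℕ → ℕ)) : Prop :=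
  IsPathList k mu nu p ∧ ∀ rho ∈ p, IsStripAny k lam rho

/-! The column move `M` is built from column-type strings, so the first one never starts in a row
whose leftmost `k`-boundary cell has hook `k`; adding it therefore lengthens the `k`-row shape in
its top row `h` by one. The strings are translates, with bottom cells (hence top cells) in
consecutive rows, so the last one lengthens row `h + r - 1` from `rs(μ)_h` to `rs(μ)_h + 1`,
where `r` is the rank. If `r ≥ 2`, the strip `ν/λ` forces `rs(ν)_{h+r-1} ≤ rs(λ)_{h+r-2}`, and
`rs(λ) ≤ rs(μ)` together with `rs(μ)` being weakly decreasing gives `rs(ν)_{h+r-1} ≤ rs(μ)_h`,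
a contradiction. -/

section Partitions

variable {f : ℕ → ℕ}

theorem conj_eq_ncard (f : ℕ → ℕ) (j : ℕ) : conj f j = {i | j < f i}.ncard :=
  Nat.card_coe_set_eq _

theorem rsK_eq_ncard (k : ℕ) (f : ℕ → ℕ) (i : ℕ) :
    rsK k f i = {j | (i, j) ∈ bdry k f}.ncard :=
  Nat.card_coe_set_eq _

theorem IsPartition.finite_setOf_lt (hf : IsPartition f) (j : ℕ) : {i | j < f i}.Finite := by
  obtain ⟨N, hN⟩ := hf.2
  refine (Set.finite_Iio N).subset fun i (hi : j < f i) => ?_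
  by_contra! hNi
  have := hN i (not_lt.mp hNi)
  omega

theorem conj_le_of_forall_lt {j p : ℕ} (h : ∀ i, j < f i → i < p) : conj f j ≤ p := by
  rw [conj_eq_ncard]
  calc {i | j < f i}.ncard ≤ (Set.Iio p).ncard :=
        Set.ncard_le_ncard (fun i hi => h i hi) (Set.finite_Iio p)
    _ = p := by simp

theorem IsPartition.conj_anti (hf : IsPartition f) {j j' : ℕ} (h : j ≤ j') :
    conj f j' ≤ conj f j := by
  rw [conj_eq_ncard, conj_eq_ncard]
  exact Set.ncard_le_ncard (fun i hi => lt_of_le_of_lt h hi) (hf.finite_setOf_lt j)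

theorem IsPartition.hook_lt_hook_of_lt (hf : IsPartition f) {p c j : ℕ} (hcj : c < j)
    (hj : j < f p) : hook f (p, j) < hook f (p, c) := by
  have := hf.conj_anti hcj.le
  simp only [hook]
  omega

theorem IsPartition.hook_ne_of_not_B0HookK {k : ℕ} {a : List Cell} {h : Cell}
    (hf : IsPartition f) (hB0 : ¬ B0HookK k f a) (hh : a.head? = some h) {j : ℕ}
    (hj : j < f h.1) : hook f (h.1, j) ≠ k := by
  intro hjk
  refine hB0 ⟨h, (h.1, j), hh, ⟨⟨hj, hjk.le⟩, rfl, fun c hc => ?_⟩, hjk⟩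
  by_contra! hcj
  have hlt : hook f (h.1, j) < hook f (h.1, c) := hf.hook_lt_hook_of_lt hcj hj
  have hck : hook f (h.1, c) ≤ k := hc.2
  omega

end Partitions

theorem rsZ_natCast (k : ℕ) (f : ℕ → ℕ) (n : ℕ) : rsZ k f n = rsK k f n := by
  simp [rsZ]

theorem OneCellPerCol.mono_left {f g h : ℕ → ℕ} (hfh : OneCellPerCol f h)
    (hfg : ∀ i, f i ≤ g i) : OneCellPerCol g h := by
  have hsub : ∀ x, x ∈ cellsOf h \ cellsOf g → x ∈ cellsOf h \ cellsOf f :=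
    fun x ⟨hxh, hxg⟩ => ⟨hxh, fun (hxf : x.2 < f x.1) => hxg (hxf.trans_le (hfg x.1))⟩
  exact fun x y hx hy => hfh x y (hsub x hx) (hsub y hy)

theorem OneCellPerCol.le_of_succ {f g : ℕ → ℕ} (hfg : OneCellPerCol f g) {i : ℕ}
    (hf : f (i + 1) ≤ f i) (hg : g (i + 1) ≤ g i) : g (i + 1) ≤ f i := by
  by_contra! hlt
  have hlow : ((i, f i) : Cell) ∈ cellsOf g \ cellsOf f :=
    ⟨show f i < g i by omega, show ¬ f i < f i by omega⟩
  have hhigh : ((i + 1, f i) : Cell) ∈ cellsOf g \ cellsOf f :=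
    ⟨show f i < g (i + 1) from hlt, show ¬ f i < f (i + 1) by omega⟩
  simpa using congrArg Prod.fst (hfg _ _ hlow hhigh rfl)

namespace IsString

variable {k : ℕ} {f g : ℕ → ℕ} {a : List Cell}

theorem mem_iff_mem_diff (hs : IsString k f g a) {x : Cell} :
    x ∈ a ↔ x ∈ cellsOf g \ cellsOf f := by
  rw [hs.2.2.2.2.1]
  rfl

theorem mem_diff (hs : IsString k f g a) {x : Cell} (hx : x ∈ a) :
    x ∈ cellsOf g \ cellsOf f :=
  hs.mem_iff_mem_diff.1 hx

theorem pairwise_fst_gt (hs : IsString k f g a) : a.Pairwise fun x y => y.1 < x.1 := by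
  have : Trans (fun x y : Cell => y.1 < x.1) (fun x y : Cell => y.1 < x.1)
      (fun x y : Cell => y.1 < x.1) := ⟨fun h₁ h₂ => h₂.trans h₁⟩
  exact List.isChain_iff_pairwise.mp (hs.2.2.2.2.2.imp fun _ _ h => h.1)

theorem eq_of_fst_eq (hs : IsString k f g a) {x y : Cell} (hx : x ∈ a) (hy : y ∈ a)
    (hxy : x.1 = y.1) : x = y := by
  have : Std.Symm (fun x y : Cell => x.1 ≠ y.1) := ⟨fun _ _ h => h.symm⟩
  by_contra hne
  exact (hs.pairwise_fst_gt.imp (fun h => Nat.ne_of_gt h)).forall hx hy hne hxy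

theorem head_mem_and_forall_fst_le (hs : IsString k f g a) {h : Cell} (hh : a.head? = some h) :
    h ∈ a ∧ ∀ x ∈ a, x.1 ≤ h.1 := by
  cases a with
  | nil => simp at hh
  | cons y tl =>
    obtain rfl : y = h := by simpa using hh
    refine ⟨List.mem_cons_self, fun x hx => ?_⟩
    rcases List.mem_cons.mp hx with rfl | hx
    · exact le_rfl
    · exact (List.pairwise_cons.mp hs.pairwise_fst_gt).1 x hx |>.le

theorem snd_eq_and_eq_succ (hs : IsString k f g a) {x : Cell} (hx : x ∈ a) :
    x.2 = f x.1 ∧ g x.1 = f x.1 + 1 := by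
  obtain ⟨hxg, hxf⟩ := hs.mem_diff hx
  change x.2 < g x.1 at hxg
  change ¬ x.2 < f x.1 at hxf
  have hrow : ∀ c, f x.1 ≤ c → c < g x.1 → c = x.2 := by
    intro c hfc hcg
    have hc : ((x.1, c) : Cell) ∈ a :=
      hs.mem_iff_mem_diff.2 ⟨hcg, show ¬ c < f x.1 by omega⟩
    exact congrArg Prod.snd (hs.eq_of_fst_eq hc hx rfl)
  have h₁ := hrow (f x.1) le_rfl (by omega)
  by_contra hne
  have := hrow (f x.1 + 1) (by omega) (by omega)
  omega

theorem eq_of_forall_fst_ne (hs : IsString k f g a) {σ : ℕ} (hσ : ∀ x ∈ a, x.1 ≠ σ) :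
    g σ = f σ := by
  by_contra hne
  have hlt : f σ < g σ := lt_of_le_of_ne (hs.2.2.1 σ) (Ne.symm hne)
  have hσa : ((σ, f σ) : Cell) ∈ a :=
    hs.mem_iff_mem_diff.2 ⟨hlt, show ¬ f σ < f σ from lt_irrefl _⟩
  exact hσ _ hσa rfl

theorem conj_eq_of_lt (hs : IsString k f g a) {h : Cell} (hh : a.head? = some h) {j : ℕ}
    (hj : j < f h.1) : conj g j = conj f j := by
  rw [conj_eq_ncard, conj_eq_ncard]
  congr 1
  ext i
  by_cases hrow : ∃ x ∈ a, x.1 = i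
  · obtain ⟨x, hxa, rfl⟩ := hrow
    have hx := hs.snd_eq_and_eq_succ hxa
    have := hs.1.1 x.1 h.1 ((hs.head_mem_and_forall_fst_le hh).2 x hxa)
    simp only [Set.mem_ofPred_eq]
    omega
  · push Not at hrow
    simp [hs.eq_of_forall_fst_ne hrow]

theorem conj_head_eq_succ (hs : IsString k f g a)
    (hcols : ∀ x ∈ a, ∀ y ∈ a, x.2 = y.2 → x = y) {h : Cell} (hh : a.head? = some h) :
    conj g (f h.1) = conj f (f h.1) + 1 := by
  obtain ⟨hha, hmax⟩ := hs.head_mem_and_forall_fst_le hh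
  have hh2 := hs.snd_eq_and_eq_succ hha
  rw [conj_eq_ncard, conj_eq_ncard,
    ← Set.ncard_insert_of_notMem (a := h.1) (s := {i | f h.1 < f i}) (by simp)
      (hs.1.finite_setOf_lt _)]
  congr 1
  ext i
  simp only [Set.mem_ofPred_eq, Set.mem_insert_iff]
  by_cases hi : i = h.1
  · subst hi
    omega
  by_cases hrow : ∃ x ∈ a, x.1 = i
  · obtain ⟨x, hxa, rfl⟩ := hrow
    have hx := hs.snd_eq_and_eq_succ hxa
    have hxh : x.2 ≠ h.2 := fun hc => hi (congrArg Prod.fst (hcols x hxa h hha hc))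
    have := hs.1.1 x.1 h.1 (hmax x hxa)
    omega
  · push Not at hrow
    simp [hi, hs.eq_of_forall_fst_ne hrow]

theorem hook_head_row_eq_succ (hs : IsString k f g a) {h : Cell} (hh : a.head? = some h)
    {j : ℕ} (hj : j < f h.1) : hook g (h.1, j) = hook f (h.1, j) + 1 := by
  have hconj := hs.conj_eq_of_lt hh hj
  have := (hs.snd_eq_and_eq_succ (hs.head_mem_and_forall_fst_le hh).1).2
  simp only [hook, hconj]
  omega

/-- No old cell of the row has hook `k`, so growing each hook by one keeps the same cells in the
`k`-boundary; the new cell has hook `1`. -/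
theorem rsK_head_eq_succ (hk : 1 ≤ k) (hs : IsString k f g a) (hB0 : ¬ B0HookK k f a)
    (hcols : ∀ x ∈ a, ∀ y ∈ a, x.2 = y.2 → x = y) {h : Cell} (hh : a.head? = some h) :
    rsK k g h.1 = rsK k f h.1 + 1 := by
  have hgh := (hs.snd_eq_and_eq_succ (hs.head_mem_and_forall_fst_le hh).1).2
  have hconj := hs.conj_head_eq_succ hcols hh
  have hconj_le : conj f (f h.1) ≤ h.1 := conj_le_of_forall_lt fun i hi => by
    by_contra! hhi
    have := hs.1.1 h.1 i hhi
    omega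
  have hfin : {j | (h.1, j) ∈ bdry k f}.Finite :=
    (Set.finite_Iio (f h.1)).subset fun j hj => hj.1
  rw [rsK_eq_ncard, rsK_eq_ncard,
    ← Set.ncard_insert_of_notMem (a := f h.1) (s := {j | (h.1, j) ∈ bdry k f})
      (by simp [bdry, cellsOf]) hfin]
  congr 1
  ext j
  simp only [bdry, cellsOf, Set.mem_ofPred_eq, Set.mem_insert_iff]
  rcases lt_trichotomy j (f h.1) with hj | rfl | hj
  · have := hs.hook_head_row_eq_succ hh hj
    have := hs.1.hook_ne_of_not_B0HookK hB0 hh hj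
    omega
  · simp only [hook, hconj, true_or, iff_true]
    omega
  · omega

end IsString

section Translates

variable {k : ℕ} {f g f' g' : ℕ → ℕ} {a b : List Cell}

theorem TranslateStrings.fst_shift (hT : TranslateStrings k f g f' g' a b) {x y : Cell}
    (hx : a.getLast? = some x) (hy : b.getLast? = some y) {d : ℕ} (hd : y.1 = x.1 + d) :
    (∀ (i : ℕ) (x' y' : Cell), a[i]? = some x' → b[i]? = some y' → y'.1 = x'.1 + d) ∧
      ∀ r : ℕ, rsK k g r ≠ rsK k f r → rsK k f r = rsK k f' (r + d) := by
  obtain ⟨v, hlen, hcell, hrs, -⟩ := hT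
  rw [List.getLast?_eq_getElem?] at hx hy
  rw [← hlen] at hy
  have hv : v.1 = d := by
    have := (hcell _ x y hx hy).1
    omega
  refine ⟨fun i x' y' hx' hy' => ?_, fun r hr => ?_⟩
  · have := (hcell i x' y' hx' hy').1
    omega
  · have := (hrs r).2 (by rwa [rsZ_natCast, rsZ_natCast, Ne, Nat.cast_inj])
    rw [hv, ← Nat.cast_add, rsZ_natCast, rsZ_natCast] at this
    exact_mod_cast this

end Translates

namespace PreMove

variable {k : ℕ} {lam mu : ℕ → ℕ} (M : PreMove k lam mu)

theorem exists_head {i : ℕ} (hi : i < M.rank) : ∃ x, (M.strs i).head? = some x :=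
  ⟨_, List.head?_eq_some_head (M.isStr i hi).2.2.2.1⟩

theorem exists_getLast {i : ℕ} (hi : i < M.rank) : ∃ x, (M.strs i).getLast? = some x :=
  ⟨_, List.getLast?_eq_some_getLast (M.isStr i hi).2.2.2.1⟩

theorem shape_mono {i j : ℕ} (hij : i ≤ j) (hj : j ≤ M.rank) (σ : ℕ) :
    M.shape i σ ≤ M.shape j σ := by
  induction j, hij using Nat.le_induction with
  | base => exact le_rfl
  | succ n _ ih => exact (ih (by omega)).trans ((M.isStr n (by omega)).2.2.1 σ)

theorem mem_diff_of_mem_strs {i : ℕ} (hi : i < M.rank) {x : Cell} (hx : x ∈ M.strs i) :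
    x ∈ cellsOf mu \ cellsOf lam := by
  obtain ⟨hxg, hxf⟩ := (M.isStr i hi).mem_diff hx
  have hup := M.shape_mono (Nat.succ_le_of_lt hi) le_rfl x.1
  have hdown := M.shape_mono (Nat.zero_le i) hi.le x.1
  rw [M.shape_rank] at hup
  rw [M.shape_zero] at hdown
  exact ⟨show x.2 < mu x.1 from lt_of_lt_of_le hxg hup,
    fun (hxl : x.2 < lam x.1) => hxf (lt_of_lt_of_le hxl hdown)⟩

variable {M}

theorem IsColMove.getLast_fst (hM : M.IsColMove) {i : ℕ} (hi : i < M.rank) {x y : Cell}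
    (hx : (M.strs 0).getLast? = some x) (hy : (M.strs i).getLast? = some y) :
    y.1 = x.1 + i := by
  induction i generalizing y with
  | zero => simp_all
  | succ n ih =>
    obtain ⟨z, hz⟩ := M.exists_getLast (i := n) (by omega)
    have := ih (by omega) hz
    have := hM.2 n hi z y hz hy
    omega

theorem IsColMove.head_fst (hM : M.IsColMove) {i : ℕ} (hi : i < M.rank) {h h' : Cell}
    (hh : (M.strs 0).head? = some h) (hh' : (M.strs i).head? = some h') : h'.1 = h.1 + i := by
  obtain ⟨x, hx⟩ := M.exists_getLast M.rank_pos
  obtain ⟨y, hy⟩ := M.exists_getLast hi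
  rw [List.head?_eq_getElem?] at hh hh'
  exact (TranslateStrings.fst_shift (M.translates 0 M.rank_pos i hi) hx hy
    (hM.getLast_fst hi hx hy)).1 0 h h' hh hh'

theorem IsColMove.rsK_add_rank_sub_one (hk : 1 ≤ k) (hM : M.IsColMove)
    (hcol : OneCellPerCol lam mu) {h : Cell} (hh : (M.strs 0).head? = some h) :
    rsK k mu (h.1 + (M.rank - 1)) = rsK k lam h.1 + 1 := by
  have hn : M.rank - 1 < M.rank := Nat.sub_lt M.rank_pos one_pos
  have hcols : ∀ i < M.rank, ∀ x ∈ M.strs i, ∀ y ∈ M.strs i, x.2 = y.2 → x = y :=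
    fun i hi x hx y hy => hcol x y (M.mem_diff_of_mem_strs hi hx) (M.mem_diff_of_mem_strs hi hy)
  have hrise : ∀ i (hi : i < M.rank) {h'}, (M.strs i).head? = some h' →
      rsK k (M.shape (i + 1)) h'.1 = rsK k (M.shape i) h'.1 + 1 :=
    fun i hi _ hh' => (M.isStr i hi).rsK_head_eq_succ hk (hM.1 i hi).1 (hcols i hi) hh'
  obtain ⟨h', hh'⟩ := M.exists_head hn
  obtain ⟨x, hx⟩ := M.exists_getLast M.rank_pos
  obtain ⟨y, hy⟩ := M.exists_getLast hn
  have hfirst := hrise 0 M.rank_pos hh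
  have hlast := hrise _ hn hh'
  have htrans := (TranslateStrings.fst_shift (M.translates 0 M.rank_pos _ hn) hx hy
    (hM.getLast_fst hn hx hy)).2 h.1 (by omega)
  rw [Nat.sub_add_cancel M.rank_pos, M.shape_rank, hM.head_fst hn hh hh'] at hlast
  rw [M.shape_zero] at htrans
  omega

end PreMove

/-- every `λ`-augmentation column move of a strip `μ/λ` has
rank 1. -/
theorem statement_15 (k : ℕ) (hk : 2 ≤ k) (lam mu nu : ℕ → ℕ)
    (hS : IsStripAny k lam mu) (M : PreMove k mu nu) (hM : M.IsColMove)
    (hAug : IsStripAny k lam nu) : M.rank = 1 := by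
  obtain ⟨_, hlam, -, hlam_mu, -, hrs_mu, -⟩ := hS
  obtain ⟨_, -, hnu, -, hcol_nu, -, hrs_nu, -⟩ := hAug
  obtain ⟨h, hh⟩ := M.exists_head M.rank_pos
  have hrise := hM.rsK_add_rank_sub_one (by omega) (hcol_nu.mono_left hlam_mu) hh
  by_contra hr
  obtain ⟨n, hn⟩ : ∃ n, M.rank = n + 2 := ⟨M.rank - 2, by have := M.rank_pos; omega⟩
  rw [hn, show h.1 + (n + 2 - 1) = h.1 + n + 1 by omega] at hrise
  have hinterlace : rsK k nu (h.1 + n + 1) ≤ rsK k lam (h.1 + n) :=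
    hrs_nu.le_of_succ (hlam.2.1 _ _ (Nat.le_succ _)) (hnu.2.1 _ _ (Nat.le_succ _))
  have hmu_anti := M.src_kshape.2.1 h.1 (h.1 + n) (Nat.le_add_right _ _)
  have := hrs_mu (h.1 + n)
  omega
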